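/- arXiv:1507.04951 — 2 statements merged into one kernel-verified Lean document; each statement's English description precedes it below -/
import Mathlib

section
/- For every integer m ≥ 1 and every real number y, one has ∑_{a=0}^{m-1} C(m-1,a) · ∫_0^y x^{2a} (y-x)^{2(m-a-1)} / ((a+1)! · (m-a)!) dx = 2 · y^{2m-1} / (m+1)!. -/
/-!
With `n = m - 1` and `b = n - a`, the Beta integral
`∫₀ʸ x^p (y - x)^q dx = p! q! / (p + q + 1)! · y^(p+q+1)` turns the `a`-th summand into
`n! / (2n + 1)! · C_a C_b · y^(2n+1)`, where `C_k = (2k)! / (k! (k+1)!)` is the Catalan number.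
Segner's recurrence `∑ C_a C_{n-a} = C_{n+1}` collapses the sum, and
`n! C_{n+1} / (2n + 1)! = 2 / (n + 2)!`.
-/

open Finset Nat

theorem integral_pow_mul_one_sub_pow (p q : ℕ) :
    ∫ x in (0:ℝ)..1, x ^ p * (1 - x) ^ q = (p ! * q ! : ℝ) / (p + q + 1)! := by
  have hGamma := Complex.Gamma_mul_Gamma_eq_betaIntegral (s := (p : ℂ) + 1) (t := (q : ℂ) + 1)
    (by simp only [Complex.add_re, Complex.natCast_re, Complex.one_re]; positivity)
    (by simp only [Complex.add_re, Complex.natCast_re, Complex.one_re]; positivity)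
  have hbeta : Complex.betaIntegral ((p : ℂ) + 1) ((q : ℂ) + 1) =
      ((∫ x in (0:ℝ)..1, x ^ p * (1 - x) ^ q : ℝ) : ℂ) := by
    rw [Complex.betaIntegral, ← intervalIntegral.integral_ofReal]
    refine intervalIntegral.integral_congr fun x _ => ?_
    push_cast
    rw [add_sub_cancel_right, add_sub_cancel_right, Complex.cpow_natCast, Complex.cpow_natCast]
  rw [show (p : ℂ) + 1 + ((q : ℂ) + 1) = ((p + q + 1 : ℕ) : ℂ) + 1 by push_cast; ring,
    Complex.Gamma_nat_eq_factorial, Complex.Gamma_nat_eq_factorial,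
    Complex.Gamma_nat_eq_factorial, hbeta] at hGamma
  rw [eq_div_iff (by positivity), mul_comm]
  exact_mod_cast hGamma.symm

theorem integral_pow_mul_sub_pow (p q : ℕ) (y : ℝ) :
    ∫ x in (0:ℝ)..y, x ^ p * (y - x) ^ q = (p ! * q ! : ℝ) / (p + q + 1)! * y ^ (p + q + 1) := by
  have hscale := intervalIntegral.smul_integral_comp_mul_left
    (fun x => x ^ p * (y - x) ^ q) y (a := 0) (b := 1)
  simp only [mul_zero, mul_one, smul_eq_mul] at hscale
  have hsubst (x : ℝ) : (y * x) ^ p * (y - y * x) ^ q = y ^ (p + q) * (x ^ p * (1 - x) ^ q) := by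
    rw [show y - y * x = y * (1 - x) by ring, mul_pow, mul_pow]
    ring
  simp_rw [← hscale, hsubst, intervalIntegral.integral_const_mul, integral_pow_mul_one_sub_pow]
  ring

theorem catalan_eq_factorial_div {K : Type*} [Field K] [CharZero K] (n : ℕ) :
    (catalan n : K) = (2 * n)! / (n ! * (n + 1)!) := by
  have hcentral : ((n + 1) * catalan n : K) = (2 * n)! / (n ! * n !) := by
    rw [← Nat.cast_succ, ← Nat.cast_mul, succ_mul_catalan_eq_centralBinom,
      centralBinom_eq_two_mul_choose, cast_choose K (by omega), show 2 * n - n = n by omega]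
  rw [eq_div_iff (by simp [factorial_ne_zero])] at hcentral
  rw [eq_div_iff (by simp [factorial_ne_zero]), factorial_succ]
  push_cast
  linear_combination hcentral

theorem choose_mul_integral_eq_catalan_mul_catalan (a b : ℕ) (y : ℝ) :
    ((a + b).choose a : ℝ) *
        ∫ x in (0:ℝ)..y, x ^ (2 * a) * (y - x) ^ (2 * b) / ((a + 1)! * (b + 1)!) =
      (a + b)! / (2 * (a + b) + 1)! * (catalan a * catalan b) * y ^ (2 * (a + b) + 1) := by
  rw [intervalIntegral.integral_div, integral_pow_mul_sub_pow, cast_choose ℝ (by omega),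
    catalan_eq_factorial_div, catalan_eq_factorial_div, show 2 * a + 2 * b = 2 * (a + b) by ring,
    show a + b - a = b by omega]
  field_simp

theorem factorial_div_mul_catalan_succ (n : ℕ) :
    (n ! : ℝ) / (2 * n + 1)! * catalan (n + 1) = 2 / (n + 2)! := by
  rw [catalan_eq_factorial_div, show 2 * (n + 1) = 2 * n + 1 + 1 by ring,
    factorial_succ (2 * n + 1), factorial_succ n, factorial_succ (n + 1)]
  push_cast
  field_simp
  ring

/-- Part (2) of Proposition `id`:
`∑_{a=0}^{m-1} C(m-1,a) ∫_0^y x^{2a}(y-x)^{2(m-a-1)}/((a+1)!(m-a)!) dx = 2 y^{2m-1}/(m+1)!`. -/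
theorem stmt_1 (m : ℕ) (hm : 1 ≤ m) (y : ℝ) :
    ∑ a ∈ Finset.range m, (Nat.choose (m - 1) a : ℝ) *
      ∫ x in (0:ℝ)..y,
        x ^ (2 * a) * (y - x) ^ (2 * (m - a - 1)) /
          ((Nat.factorial (a + 1) : ℝ) * (Nat.factorial (m - a) : ℝ)) =
    2 * y ^ (2 * m - 1) / (Nat.factorial (m + 1) : ℝ) := by
  obtain ⟨n, rfl⟩ : ∃ n, m = n + 1 := ⟨m - 1, by omega⟩
  have hsummand : ∀ a ∈ range (n + 1),
      ((n + 1 - 1).choose a : ℝ) *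
        ∫ x in (0:ℝ)..y, x ^ (2 * a) * (y - x) ^ (2 * (n + 1 - a - 1)) /
          ((a + 1)! * (n + 1 - a)! : ℝ) =
      n ! / (2 * n + 1)! * (catalan a * catalan (n - a)) * y ^ (2 * n + 1) := by
    intro a ha
    obtain ⟨b, rfl⟩ : ∃ b, n = a + b := ⟨n - a, by grind⟩
    rw [show a + b + 1 - 1 = a + b by omega, show a + b + 1 - a - 1 = b by omega,
      show a + b + 1 - a = b + 1 by omega, show a + b - a = b by omega]
    exact choose_mul_integral_eq_catalan_mul_catalan a b y
  have hsegner : ∑ a ∈ range (n + 1), (catalan a * catalan (n - a) : ℝ) = catalan (n + 1) := by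
    rw [catalan_succ, Fin.sum_univ_eq_sum_range (fun a => catalan a * catalan (n - a))]
    push_cast
    rfl
  rw [sum_congr rfl hsummand, ← sum_mul, ← mul_sum, hsegner, factorial_div_mul_catalan_succ,
    show 2 * (n + 1) - 1 = 2 * n + 1 by omega]
  ring
end

section
/- Let f : ℝ → ℝ be defined by f(x) = ∑_{m=0}^∞ x^{2m} / (m! · (m+1)!). Then for every real number y, ∫_0^y f(x) · f(y-x) dx = f'(y), where f' denotes the derivative of f. -/
/-!
Since `(2m)! / (m! (m+1)!)` is the Catalan number `C m`, the function is
`f x = ∑ C m x^(2m)/(2m)!`. The beta integral `∫₀^y x^a/a! (y-x)^b/b! dx = y^(a+b+1)/(a+b+1)!`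
turns `f ∗ f` termwise into `∑ₖ (∑_{i+j=k} C i C j) y^(2k+1)/(2k+1)!`, and Segner's recurrence
`∑_{i+j=k} C i C j = C (k+1)` identifies this with the termwise derivative of `f`.
-/

open Finset Nat intervalIntegral

theorem hasDerivAt_pow_succ_div_factorial (n : ℕ) (x : ℝ) :
    HasDerivAt (fun x : ℝ => x ^ (n + 1) / (n + 1)!) (x ^ n / n !) x := by
  refine ((hasDerivAt_pow (n + 1) x).div_const ((n + 1)! : ℝ)).congr_deriv ?_
  rw [Nat.factorial_succ, Nat.cast_mul]
  field_simp
  push_cast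
  ring

theorem integral_pow_div_factorial_mul_sub_pow_div_factorial (m n : ℕ) (y : ℝ) :
    ∫ x in (0 : ℝ)..y, x ^ m / m ! * ((y - x) ^ n / n !) = y ^ (m + n + 1) / (m + n + 1)! := by
  induction n generalizing m with
  | zero =>
    simp only [pow_zero, Nat.factorial_zero, Nat.cast_one, div_one, mul_one, add_zero,
      integral_div, integral_pow, ne_eq, add_eq_zero, one_ne_zero, and_false,
      not_false_eq_true, zero_pow, sub_zero]
    rw [Nat.factorial_succ, Nat.cast_mul]
    push_cast
    field_simp
  | succ n ih =>
    have hu : ∀ x ∈ Set.uIcc 0 y, HasDerivAt (fun x => (y - x) ^ (n + 1) / ((n + 1)! : ℝ))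
        (-((y - x) ^ n / n !)) x := fun x _ => by
      simpa [Function.comp_def] using (hasDerivAt_pow_succ_div_factorial n (y - x)).comp x
        ((hasDerivAt_id x).const_sub y)
    have hv : ∀ x ∈ Set.uIcc 0 y,
        HasDerivAt (fun x : ℝ => x ^ (m + 1) / ((m + 1)! : ℝ)) (x ^ m / m !) x :=
      fun x _ => hasDerivAt_pow_succ_div_factorial m x
    have hparts := integral_mul_deriv_eq_deriv_mul hu hv
      (by apply Continuous.intervalIntegrable; fun_prop)
      (by apply Continuous.intervalIntegrable; fun_prop)
    simp only [sub_self, sub_zero, ne_eq, add_eq_zero, one_ne_zero, and_false,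
      not_false_eq_true, zero_pow, zero_div, mul_zero, zero_mul, neg_mul,
      integral_neg, sub_neg_eq_add, zero_add] at hparts
    rw [show m + (n + 1) + 1 = m + 1 + n + 1 by ring, ← ih (m + 1)]
    simpa only [mul_comm] using hparts

theorem catalan_mul_factorial_mul_factorial_succ (m : ℕ) :
    catalan m * (m ! * (m + 1)!) = (2 * m)! := by
  have h := Nat.choose_mul_factorial_mul_factorial (show m ≤ 2 * m by omega)
  rw [show 2 * m - m = m by omega, ← Nat.centralBinom_eq_two_mul_choose,
    ← succ_mul_catalan_eq_centralBinom] at h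
  rw [← h, Nat.factorial_succ]
  ring

theorem pow_div_factorial_mul_factorial_succ (m : ℕ) (x : ℝ) :
    x ^ (2 * m) / (m ! * (m + 1)! : ℝ) = catalan m * (x ^ (2 * m) / (2 * m)!) := by
  have h := catalan_mul_factorial_mul_factorial_succ m
  have hC : (catalan m : ℝ) ≠ 0 := by
    exact_mod_cast left_ne_zero_of_mul (h ▸ (2 * m).factorial_ne_zero)
  rw [← h]
  push_cast
  field_simp

theorem catalan_le_four_pow (n : ℕ) : catalan n ≤ 4 ^ n :=
  (catalan_eq_centralBinom_div n ▸ Nat.div_le_self _ _).trans (centralBinom_le_four_pow n)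

noncomputable def catalanTerm (m : ℕ) (x : ℝ) : ℝ := catalan m * (x ^ (2 * m) / (2 * m)!)

noncomputable def catalanEGF (x : ℝ) : ℝ := ∑' m, catalanTerm m x

theorem continuous_catalanTerm (m : ℕ) : Continuous (catalanTerm m) := by
  unfold catalanTerm; fun_prop

theorem catalanTerm_nonneg (m : ℕ) (x : ℝ) : 0 ≤ catalanTerm m x := by
  unfold catalanTerm
  have := (even_two_mul m).pow_nonneg x
  positivity

theorem catalanTerm_le_of_abs_le (m : ℕ) {s r : ℝ} (h : |s| ≤ r) :
    catalanTerm m s ≤ catalanTerm m r := by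
  unfold catalanTerm
  rw [← (even_two_mul m).pow_abs]
  gcongr

theorem summable_mul_pow_div_factorial {c : ℕ → ℝ} {g : ℕ → ℕ} (hg : Function.Injective g)
    (K : ℝ) (hc : ∀ k, |c k| ≤ K * 2 ^ g k) (x : ℝ) :
    Summable fun k => c k * (x ^ g k / (g k)!) := by
  refine Summable.of_norm_bounded
    (((Real.summable_pow_div_factorial (2 * |x|)).comp_injective hg).mul_left K) fun k => ?_
  simp only [Function.comp_apply, norm_mul, norm_div, norm_pow, Real.norm_eq_abs,
    Nat.abs_cast, mul_pow, ← mul_assoc, mul_div_assoc]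
  gcongr
  exact hc k

theorem summable_catalanTerm (x : ℝ) : Summable fun m => catalanTerm m x :=
  summable_mul_pow_div_factorial (fun a b h => by omega) 1
    (fun m => by
      rw [abs_of_nonneg (by positivity), one_mul, pow_mul]
      exact_mod_cast catalan_le_four_pow m) x

theorem summable_catalan_succ_mul_pow_div_factorial (x : ℝ) :
    Summable fun k => (catalan (k + 1) : ℝ) * (x ^ (2 * k + 1) / (2 * k + 1)!) :=
  summable_mul_pow_div_factorial (fun a b h => by omega) 2
    (fun k => by
      rw [abs_of_nonneg (by positivity)]
      exact_mod_cast (catalan_le_four_pow (k + 1)).trans_eq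
        (by rw [show 4 = 2 ^ 2 by rfl, ← pow_mul]; ring)) x

theorem hasDerivAt_catalanTerm_succ (k : ℕ) (x : ℝ) :
    HasDerivAt (catalanTerm (k + 1)) (catalan (k + 1) * (x ^ (2 * k + 1) / (2 * k + 1)!)) x := by
  have h := (hasDerivAt_pow_succ_div_factorial (2 * k + 1) x).const_mul (catalan (k + 1) : ℝ)
  rwa [show 2 * k + 1 + 1 = 2 * (k + 1) by ring] at h

theorem hasDerivAt_catalanEGF (y : ℝ) :
    HasDerivAt catalanEGF (∑' k, catalan (k + 1) * (y ^ (2 * k + 1) / (2 * k + 1)!)) y := by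
  have hEGF : catalanEGF = fun x => 1 + ∑' k, catalanTerm (k + 1) x := by
    ext x
    rw [catalanEGF, (summable_catalanTerm x).tsum_eq_zero_add]
    simp [catalanTerm]
  set r := |y| + 1
  have hy : y ∈ Metric.ball 0 r := by simp [r]
  rw [hEGF]
  refine HasDerivAt.const_add 1 (hasDerivAt_tsum_of_isPreconnected
    (summable_catalan_succ_mul_pow_div_factorial r) Metric.isOpen_ball
    (convex_ball 0 r).isPreconnected (fun k x _ => hasDerivAt_catalanTerm_succ k x)
    (fun k x hx => ?_) hy ((summable_catalanTerm y).comp_injective (add_left_injective 1)) hy)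
  rw [mem_ball_zero_iff, Real.norm_eq_abs] at hx
  simp only [norm_mul, norm_div, norm_pow, Real.norm_eq_abs, Nat.abs_cast]
  gcongr

theorem integral_catalanTerm_mul (i j : ℕ) (y : ℝ) :
    ∫ x in (0 : ℝ)..y, catalanTerm i x * catalanTerm j (y - x) =
      catalan i * catalan j * (y ^ (2 * i + 2 * j + 1) / (2 * i + 2 * j + 1)!) := by
  simp only [catalanTerm, mul_mul_mul_comm _ (_ / _), integral_const_mul,
    integral_pow_div_factorial_mul_sub_pow_div_factorial]

theorem integral_sum_antidiagonal_catalanTerm_mul (k : ℕ) (y : ℝ) :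
    ∫ x in (0 : ℝ)..y, ∑ p ∈ antidiagonal k, catalanTerm p.1 x * catalanTerm p.2 (y - x) =
      catalan (k + 1) * (y ^ (2 * k + 1) / (2 * k + 1)!) := by
  rw [integral_finsetSum fun p _ => Continuous.intervalIntegrable
    (by have := continuous_catalanTerm p.1; have := continuous_catalanTerm p.2; fun_prop) _ _,
    catalan_succ', Nat.cast_sum, sum_mul]
  refine sum_congr rfl fun p hp => ?_
  rw [HasAntidiagonal.mem_antidiagonal] at hp
  rw [integral_catalanTerm_mul, ← mul_add, ← hp, Nat.cast_mul]

theorem hasSum_integral_catalanEGF_mul (y : ℝ) :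
    HasSum (fun k => (catalan (k + 1) : ℝ) * (y ^ (2 * k + 1) / (2 * k + 1)!))
      (∫ x in (0 : ℝ)..y, catalanEGF x * catalanEGF (y - x)) := by
  have hnorm (x : ℝ) : Summable fun m => ‖catalanTerm m x‖ := by
    simpa only [Real.norm_of_nonneg (catalanTerm_nonneg _ x)] using summable_catalanTerm x
  have hbound :=
    (summable_norm_sum_mul_antidiagonal_of_summable_norm (hnorm |y|) (hnorm |y|)).of_norm
  simp only [← integral_sum_antidiagonal_catalanTerm_mul]
  refine hasSum_integral_of_dominated_convergence
    (fun k _ => ∑ p ∈ antidiagonal k, catalanTerm p.1 |y| * catalanTerm p.2 |y|)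
    (fun k => Continuous.aestronglyMeasurable ?_) (fun k => .of_forall fun x hx => ?_)
    (.of_forall fun _ _ => hbound) intervalIntegrable_const
    (.of_forall fun x _ => ?_)
  · have := continuous_catalanTerm
    fun_prop
  · have hx' := Set.uIoc_subset_uIcc hx
    have h0 : |x| ≤ |y| := by simpa using Set.abs_sub_left_of_mem_uIcc hx'
    have h1 : |y - x| ≤ |y| := by simpa using Set.abs_sub_right_of_mem_uIcc hx'
    rw [Real.norm_of_nonneg (sum_nonneg fun p _ =>
      mul_nonneg (catalanTerm_nonneg _ _) (catalanTerm_nonneg _ _))]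
    exact sum_le_sum fun p _ => mul_le_mul (catalanTerm_le_of_abs_le _ h0)
      (catalanTerm_le_of_abs_le _ h1) (catalanTerm_nonneg _ _) (catalanTerm_nonneg _ _)
  · rw [catalanEGF, catalanEGF,
      tsum_mul_tsum_eq_tsum_sum_antidiagonal_of_summable_norm (hnorm x) (hnorm (y - x))]
    exact (summable_norm_sum_mul_antidiagonal_of_summable_norm
      (hnorm x) (hnorm (y - x))).of_norm.hasSum

/-- The convolution identity `f ∗ f = f'` for `f(x) = ∑ x^{2m}/(m!(m+1)!)`. -/
theorem stmt_4 (f : ℝ → ℝ)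
    (hf : ∀ x : ℝ, f x =
      ∑' m : ℕ, x ^ (2 * m) / ((Nat.factorial m : ℝ) * (Nat.factorial (m + 1) : ℝ)))
    (y : ℝ) :
    (∫ x in (0:ℝ)..y, f x * f (y - x)) = deriv f y := by
  have hf_eq : f = catalanEGF :=
    funext fun x => (hf x).trans (tsum_congr fun m => pow_div_factorial_mul_factorial_succ m x)
  rw [hf_eq, (hasDerivAt_catalanEGF y).deriv]
  exact (hasSum_integral_catalanEGF_mul y).tsum_eq.symm
end
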